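/- Assumption constants for online PCA (Proposition 6.3): Let M be a d×d positive semidefinite matrix and x ~ N(0, M). Then there exists an absolute constant c > 0 such that: (i) E[‖x xᵀ − M‖_F⁴] ≤ c tr(M)⁴; and (ii) for every Γ ≥ 1 and every X ∈ ℝ^{d×r} with ‖XXᵀ‖_F ≤ Γ and ‖M‖_F ≤ Γ, the gradient noise ξ = (x xᵀ − M)X of the population loss F(X) = (1/2)‖XXᵀ − M‖_F² satisfies E[⟨ξ, ∇²F(X) ξ⟩] ≤ c Γ² tr(M)². -/

import Mathlib

open MeasureTheory ProbabilityTheory Real Filter Matrix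

/-- Frobenius norm of a real matrix. -/
noncomputable def frob {m n : ℕ} (A : Matrix (Fin m) (Fin n) ℝ) : ℝ :=
  Real.sqrt (∑ i, ∑ j, A i j ^ 2)

/-- Trace (Frobenius) inner product of two real matrices. -/
def minner {m n : ℕ} (A B : Matrix (Fin m) (Fin n) ℝ) : ℝ :=
  ∑ i, ∑ j, A i j * B i j

/-!
Write `W = xxᵀ − M`. As `M` is positive semidefinite, `‖M‖_F ≤ tr M`, and `‖xxᵀ‖_F = ‖x‖²`, so
`‖W‖_F ≤ ‖x‖² + tr M`. Each coordinate satisfies `xᵢ ~ N(0, Mᵢᵢ)`, and bounding `y^{2k}` by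
`(2k)! vᵏ (e^{y/√v} + e^{-y/√v})` and using the Gaussian moment generating function gives
`E xᵢ^{2k} ≤ 4 (2k)! Mᵢᵢᵏ`. Minkowski's inequality in `Lᵖ` then bounds the `Lᵖ` norm of `‖x‖²` by
a multiple of `∑ᵢ Mᵢᵢ = tr M`; with `p = 4` this is (i). For (ii), Cauchy–Schwarz and
submultiplicativity of the Frobenius norm bound the Hessian form at `Z` by `4Γ‖Z‖_F²`, and
`‖WX‖_F² ≤ Γ‖W‖_F²`, so (ii) follows from the case `p = 2`.
-/

open scoped NNReal ENNReal Nat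

section Frobenius

attribute [local instance] Matrix.frobeniusNormedAddCommGroup

variable {l m n : ℕ}

theorem frob_eq_norm (A : Matrix (Fin m) (Fin n) ℝ) : frob A = ‖A‖ := by
  rw [frobenius_norm_def, frob, Real.sqrt_eq_rpow]
  simp

theorem frob_nonneg (A : Matrix (Fin m) (Fin n) ℝ) : 0 ≤ frob A := Real.sqrt_nonneg _

theorem frob_transpose (A : Matrix (Fin m) (Fin n) ℝ) : frob Aᵀ = frob A := by
  simp only [frob_eq_norm, frobenius_norm_transpose]

theorem frob_add_le (A B : Matrix (Fin m) (Fin n) ℝ) : frob (A + B) ≤ frob A + frob B := by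
  simp only [frob_eq_norm]
  exact norm_add_le A B

theorem frob_sub_le (A B : Matrix (Fin m) (Fin n) ℝ) : frob (A - B) ≤ frob A + frob B := by
  simp only [frob_eq_norm]
  exact norm_sub_le A B

theorem frob_mul_le (A : Matrix (Fin l) (Fin m) ℝ) (B : Matrix (Fin m) (Fin n) ℝ) :
    frob (A * B) ≤ frob A * frob B := by
  simp only [frob_eq_norm]
  exact frobenius_norm_mul A B

theorem frob_sq (A : Matrix (Fin m) (Fin n) ℝ) : frob A ^ 2 = minner A A := by
  rw [frob, sq_sqrt (by positivity)]
  simp only [minner, sq]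

theorem minner_eq_trace (A B : Matrix (Fin m) (Fin n) ℝ) : minner A B = (Aᵀ * B).trace := by
  simp only [minner, trace, diag, mul_apply, transpose_apply]
  exact Finset.sum_comm

theorem abs_minner_le (A B : Matrix (Fin m) (Fin n) ℝ) : |minner A B| ≤ frob A * frob B := by
  have h : minner A B = inner ℝ
      (WithLp.toLp 2 fun i => WithLp.toLp 2 (A i) :
        PiLp 2 fun _ : Fin m => EuclideanSpace ℝ (Fin n))
      (WithLp.toLp 2 fun i => WithLp.toLp 2 (B i)) := by
    simp [minner, PiLp.inner_apply, mul_comm]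
  rw [h, frob_eq_norm, frob_eq_norm]
  exact abs_real_inner_le_norm _ _

theorem frob_mul_sq (A : Matrix (Fin l) (Fin m) ℝ) (B : Matrix (Fin m) (Fin n) ℝ) :
    frob (A * B) ^ 2 = minner (Aᵀ * A) (B * Bᵀ) := by
  rw [frob_sq, minner_eq_trace, minner_eq_trace, transpose_mul, transpose_mul, transpose_transpose,
    Matrix.mul_assoc, trace_mul_comm, Matrix.mul_assoc, Matrix.mul_assoc, Matrix.mul_assoc]

theorem frob_transpose_mul_self (A : Matrix (Fin m) (Fin n) ℝ) : frob (Aᵀ * A) = frob (A * Aᵀ) := by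
  have h := frob_mul_sq Aᵀ A
  rw [transpose_transpose, ← frob_sq] at h
  exact (pow_left_inj₀ (frob_nonneg _) (frob_nonneg _) two_ne_zero).mp h

theorem frob_transpose_mul_self_le (A : Matrix (Fin m) (Fin n) ℝ) : frob (Aᵀ * A) ≤ frob A ^ 2 :=
  (frob_mul_le _ _).trans_eq (by rw [frob_transpose, sq])

theorem frob_mul_sq_le (A : Matrix (Fin l) (Fin m) ℝ) (B : Matrix (Fin m) (Fin n) ℝ) :
    frob (A * B) ^ 2 ≤ frob A ^ 2 * frob (B * Bᵀ) := by
  rw [frob_mul_sq]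
  exact (le_abs_self _).trans <| (abs_minner_le _ _).trans <|
    mul_le_mul_of_nonneg_right (frob_transpose_mul_self_le A) (frob_nonneg _)

theorem frob_mul_transpose_sq_le (A : Matrix (Fin l) (Fin m) ℝ) (B : Matrix (Fin n) (Fin m) ℝ) :
    frob (A * Bᵀ) ^ 2 ≤ frob (A * Aᵀ) * frob B ^ 2 := by
  rw [frob_mul_sq, transpose_transpose, ← frob_transpose_mul_self]
  exact (le_abs_self _).trans <| (abs_minner_le _ _).trans <|
    mul_le_mul_of_nonneg_left (frob_transpose_mul_self_le B) (frob_nonneg _)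

theorem frob_vecMulVec_self (x : Fin n → ℝ) : frob (vecMulVec x x) = ∑ i, x i ^ 2 := by
  have h : ∑ i, ∑ j, vecMulVec x x i j ^ 2 = (∑ i, x i ^ 2) ^ 2 := by
    simp only [vecMulVec_apply, sq, Finset.sum_mul_sum]
    ring_nf
  rw [frob, h, sqrt_sq (by positivity)]

theorem frob_le_trace_of_posSemidef {M : Matrix (Fin n) (Fin n) ℝ} (hM : M.PosSemidef) :
    frob M ≤ M.trace := by
  obtain ⟨B, rfl⟩ : ∃ B : Matrix (Fin n) (Fin n) ℝ, M = Bᴴ * B := by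
    open scoped MatrixOrder in exact CStarAlgebra.nonneg_iff_eq_star_mul_self.mp hM.nonneg
  rw [conjTranspose_eq_transpose_of_trivial, ← minner_eq_trace, ← frob_sq]
  exact frob_transpose_mul_self_le B

theorem frob_vecMulVec_sub_le {M : Matrix (Fin n) (Fin n) ℝ} (hM : M.PosSemidef) (x : Fin n → ℝ) :
    frob (vecMulVec x x - M) ≤ ∑ i, x i ^ 2 + M.trace :=
  (frob_sub_le _ _).trans <| by
    rw [frob_vecMulVec_self]
    gcongr
    exact frob_le_trace_of_posSemidef hM

end Frobenius

/-- The quadratic form `⟨Z, ∇²F(X) Z⟩` of the Hessian of `F(X) = ½‖XXᵀ − M‖_F²`. -/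
noncomputable def hessianQuadForm {d r : ℕ} (M : Matrix (Fin d) (Fin d) ℝ)
    (X Z : Matrix (Fin d) (Fin r) ℝ) : ℝ :=
  1 / 2 * frob (X * Zᵀ + Z * Xᵀ) ^ 2 + minner (X * Xᵀ) (Z * Zᵀ) - minner M (Z * Zᵀ)

section Hessian

variable {d r : ℕ} {M : Matrix (Fin d) (Fin d) ℝ} {X : Matrix (Fin d) (Fin r) ℝ} {Γ : ℝ}

theorem abs_hessianQuadForm_le (hX : frob (X * Xᵀ) ≤ Γ) (hM : frob M ≤ Γ)
    (Z : Matrix (Fin d) (Fin r) ℝ) : |hessianQuadForm M X Z| ≤ 4 * Γ * frob Z ^ 2 := by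
  have hΓ : 0 ≤ Γ := (frob_nonneg _).trans hX
  have hXZ : frob (X * Zᵀ) ^ 2 ≤ Γ * frob Z ^ 2 :=
    (frob_mul_transpose_sq_le X Z).trans (mul_le_mul_of_nonneg_right hX (sq_nonneg _))
  have hZX : frob (Z * Xᵀ) = frob (X * Zᵀ) := by
    rw [← frob_transpose, transpose_mul, transpose_transpose]
  have hsym : frob (X * Zᵀ + Z * Xᵀ) ≤ 2 * frob (X * Zᵀ) :=
    (frob_add_le _ _).trans_eq (by rw [hZX]; ring)
  have hZZ : frob (Z * Zᵀ) ≤ frob Z ^ 2 := by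
    simpa [frob_transpose] using frob_transpose_mul_self_le Zᵀ
  have hXX := (abs_minner_le (X * Xᵀ) (Z * Zᵀ)).trans (mul_le_mul hX hZZ (frob_nonneg _) hΓ)
  have hMZ := (abs_minner_le M (Z * Zᵀ)).trans (mul_le_mul hM hZZ (frob_nonneg _) hΓ)
  have hsq : frob (X * Zᵀ + Z * Xᵀ) ^ 2 ≤ 4 * (Γ * frob Z ^ 2) := by
    nlinarith [frob_nonneg (X * Zᵀ + Z * Xᵀ)]
  rw [hessianQuadForm, abs_le]
  constructor <;> linarith [abs_le.mp hXX, abs_le.mp hMZ, sq_nonneg (frob (X * Zᵀ + Z * Xᵀ))]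

theorem abs_hessianQuadForm_mul_le (hX : frob (X * Xᵀ) ≤ Γ) (hM : frob M ≤ Γ)
    (W : Matrix (Fin d) (Fin d) ℝ) : |hessianQuadForm M X (W * X)| ≤ 4 * Γ ^ 2 * frob W ^ 2 := by
  have hΓ : 0 ≤ Γ := (frob_nonneg _).trans hX
  calc |hessianQuadForm M X (W * X)| ≤ 4 * Γ * frob (W * X) ^ 2 := abs_hessianQuadForm_le hX hM _
    _ ≤ 4 * Γ * (frob W ^ 2 * Γ) := by
        gcongr
        exact (frob_mul_sq_le W X).trans (mul_le_mul_of_nonneg_left hX (sq_nonneg _))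
    _ = 4 * Γ ^ 2 * frob W ^ 2 := by ring

end Hessian

section Lp

variable {α : Type*} [MeasurableSpace α] {μ : Measure α} {f : α → ℝ} {p : ℕ}

theorem memLp_of_integrable_abs_pow (hp : p ≠ 0) (hf : AEStronglyMeasurable f μ)
    (h : Integrable (fun a => |f a| ^ p) μ) : MemLp f p μ := by
  rw [← integrable_norm_rpow_iff hf (by exact_mod_cast hp) (by simp)]
  simpa using h

theorem eLpNorm_le_ofReal_iff (hp : p ≠ 0) (hf : MemLp f p μ) {c : ℝ} (hc : 0 ≤ c) :
    eLpNorm f p μ ≤ ENNReal.ofReal c ↔ ∫ a, |f a| ^ p ∂μ ≤ c ^ p := by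
  rw [hf.eLpNorm_eq_integral_rpow_norm (by exact_mod_cast hp) (by simp),
    ENNReal.ofReal_le_ofReal_iff hc,
    rpow_inv_le_iff_of_pos (by positivity) hc (by simpa using Nat.pos_of_ne_zero hp)]
  simp

theorem integral_add_const_pow_le [IsProbabilityMeasure μ] (hp : p ≠ 0) (hf : MemLp f p μ)
    (hf0 : ∀ a, 0 ≤ f a) {c b : ℝ} (hc : 0 ≤ c) (hb : 0 ≤ b)
    (hfc : eLpNorm f p μ ≤ ENNReal.ofReal c) :
    Integrable (fun a => (f a + b) ^ p) μ ∧ ∫ a, (f a + b) ^ p ∂μ ≤ (c + b) ^ p := by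
  have hmem : MemLp (fun a => f a + b) p μ := hf.add (memLp_const b)
  have habs : ∀ a, |f a + b| ^ p = (f a + b) ^ p := fun a => by
    rw [abs_of_nonneg (add_nonneg (hf0 a) hb)]
  refine ⟨by simpa [habs] using hmem.integrable_norm_pow hp, ?_⟩
  simp_rw [← habs]
  refine (eLpNorm_le_ofReal_iff hp hmem (add_nonneg hc hb)).mp ?_
  calc eLpNorm (fun a => f a + b) p μ ≤ eLpNorm f p μ + eLpNorm (fun _ => b) p μ :=
        eLpNorm_add_le hf.1 aestronglyMeasurable_const
          (by exact_mod_cast Nat.one_le_iff_ne_zero.mpr hp)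
    _ ≤ ENNReal.ofReal c + ENNReal.ofReal b := by
        gcongr
        rw [eLpNorm_const _ (by exact_mod_cast hp) (IsProbabilityMeasure.ne_zero μ)]
        simp [abs_of_nonneg hb, Real.enorm_eq_ofReal_abs]
    _ = ENNReal.ofReal (c + b) := (ENNReal.ofReal_add hc hb).symm

end Lp

section Gaussian

theorem pow_two_mul_le_factorial_mul_exp (y : ℝ) (k : ℕ) :
    y ^ (2 * k) ≤ (2 * k)! * (exp y + exp (-y)) := by
  have hfact := pow_div_factorial_le_exp |y| (abs_nonneg y) (2 * k)
  have hexp : exp |y| ≤ exp y + exp (-y) := by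
    rcases abs_cases y with ⟨h, _⟩ | ⟨h, _⟩ <;> rw [h] <;> linarith [exp_pos y, exp_pos (-y)]
  rw [div_le_iff₀ (by positivity), (even_two_mul k).pow_abs] at hfact
  calc y ^ (2 * k) ≤ exp |y| * (2 * k)! := hfact
    _ ≤ (2 * k)! * (exp y + exp (-y)) := by rw [mul_comm]; gcongr

theorem exp_half_le_two : exp (1 / 2) ≤ 2 := by
  have h : exp (1 / 2) ^ 2 ≤ 2 ^ 2 := by
    rw [← exp_nat_mul]; norm_num; linarith [exp_one_lt_d9]
  exact (pow_le_pow_iff_left₀ (exp_pos _).le (by norm_num) two_ne_zero).mp h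

theorem integral_pow_two_mul_gaussianReal_le (v : ℝ≥0) (k : ℕ) :
    Integrable (fun y => y ^ (2 * k)) (gaussianReal 0 v) ∧
      ∫ y, y ^ (2 * k) ∂gaussianReal 0 v ≤ 4 * (2 * k)! * v ^ k := by
  rcases eq_or_ne v 0 with rfl | hv
  · rw [gaussianReal_zero_var]
    refine ⟨integrable_dirac enorm_lt_top, ?_⟩
    rcases k.eq_zero_or_pos with rfl | hk
    · simp
    · simp [hk.ne']
  set t : ℝ := (√v)⁻¹
  have htv : (v : ℝ) * t ^ 2 = 1 := by
    rw [inv_pow, sq_sqrt v.coe_nonneg, mul_inv_cancel₀ (by exact_mod_cast hv)]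
  have hint (s : ℝ) : Integrable (fun y => exp (s * y)) (gaussianReal 0 v) :=
    integrable_exp_mul_gaussianReal s
  have hmgf (s : ℝ) : ∫ y, exp (s * y) ∂gaussianReal 0 v = exp (v * s ^ 2 / 2) := by
    simpa [mgf] using congrFun (mgf_id_gaussianReal (μ := 0) (v := v)) s
  have hdom : ∀ y : ℝ, y ^ (2 * k) ≤ v ^ k * (2 * k)! * (exp (t * y) + exp (-t * y)) := by
    intro y
    have h := pow_two_mul_le_factorial_mul_exp (t * y) k
    have : y ^ (2 * k) = v ^ k * (t * y) ^ (2 * k) := by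
      rw [mul_pow, pow_mul t, ← mul_assoc, ← mul_pow, htv, one_pow, one_mul]
    rw [this, neg_mul]
    exact mul_le_mul_of_nonneg_left h (by positivity) |>.trans_eq (by ring)
  have hbound : Integrable (fun y => v ^ k * (2 * k)! * (exp (t * y) + exp (-t * y)))
      (gaussianReal 0 v) := ((hint t).add (hint (-t))).const_mul _
  have hint_pow : Integrable (fun y => y ^ (2 * k)) (gaussianReal 0 v) :=
    hbound.mono' (by fun_prop) (ae_of_all _ fun y => by
      rw [norm_eq_abs, abs_of_nonneg ((even_two_mul k).pow_nonneg y)]; exact hdom y)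
  refine ⟨hint_pow, ?_⟩
  calc ∫ y, y ^ (2 * k) ∂gaussianReal 0 v
      ≤ ∫ y, v ^ k * (2 * k)! * (exp (t * y) + exp (-t * y)) ∂gaussianReal 0 v :=
        integral_mono hint_pow hbound hdom
    _ = v ^ k * (2 * k)! * (2 * exp (1 / 2)) := by
        rw [integral_const_mul, integral_add (hint t) (hint (-t)), hmgf, hmgf, neg_sq, htv]
        ring
    _ ≤ 4 * (2 * k)! * v ^ k := by
        nlinarith [exp_half_le_two, show (0 : ℝ) ≤ v ^ k * (2 * k)! by positivity]

variable {Ω : Type*} [MeasurableSpace Ω] {P : Measure Ω}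

theorem integral_pow_two_mul_le_of_map_eq_gaussianReal {X : Ω → ℝ} (hX : AEMeasurable X P)
    {v : ℝ≥0} (hmap : P.map X = gaussianReal 0 v) (k : ℕ) :
    Integrable (fun ω => X ω ^ (2 * k)) P ∧ ∫ ω, X ω ^ (2 * k) ∂P ≤ 4 * (2 * k)! * v ^ k := by
  obtain ⟨hint, hle⟩ := integral_pow_two_mul_gaussianReal_le v k
  rw [← hmap] at hint hle
  have hpow : AEStronglyMeasurable (fun y : ℝ => y ^ (2 * k)) (P.map X) :=
    (continuous_pow _).aestronglyMeasurable
  exact ⟨(integrable_map_measure hpow hX).mp hint, (integral_map hX hpow).symm.trans_le hle⟩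

theorem eLpNorm_sum_sq_le {ι : Type*} (s : Finset ι) {X : ι → Ω → ℝ}
    (hX : ∀ i ∈ s, AEMeasurable (X i) P) {v : ι → ℝ≥0}
    (hmap : ∀ i ∈ s, P.map (X i) = gaussianReal 0 (v i)) {p : ℕ} (hp : p ≠ 0) {c : ℝ}
    (hc0 : 0 ≤ c) (hc : 4 * (2 * p)! ≤ c ^ p) :
    MemLp (fun ω => ∑ i ∈ s, X i ω ^ 2) p P ∧
      eLpNorm (fun ω => ∑ i ∈ s, X i ω ^ 2) p P ≤ ENNReal.ofReal (c * ∑ i ∈ s, (v i : ℝ)) := by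
  have hsq : ∀ i ∈ s, MemLp (fun ω => X i ω ^ 2) p P ∧
      eLpNorm (fun ω => X i ω ^ 2) p P ≤ ENNReal.ofReal (c * v i) := by
    intro i hi
    obtain ⟨hint, hle⟩ := integral_pow_two_mul_le_of_map_eq_gaussianReal (hX i hi) (hmap i hi) p
    have habs : ∀ ω, |X i ω ^ 2| ^ p = X i ω ^ (2 * p) := fun ω => by
      rw [abs_of_nonneg (sq_nonneg _), pow_mul]
    have hmem : MemLp (fun ω => X i ω ^ 2) p P :=
      memLp_of_integrable_abs_pow hp ((hX i hi).pow_const 2).aestronglyMeasurable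
        (by simpa only [habs] using hint)
    refine ⟨hmem, (eLpNorm_le_ofReal_iff hp hmem (by positivity)).mpr ?_⟩
    simp_rw [habs, mul_pow]
    exact hle.trans (mul_le_mul_of_nonneg_right hc (by positivity))
  refine ⟨memLp_finsetSum s fun i hi => (hsq i hi).1, ?_⟩
  calc eLpNorm (fun ω => ∑ i ∈ s, X i ω ^ 2) p P
      = eLpNorm (∑ i ∈ s, fun ω => X i ω ^ 2) p P := by simp only [Finset.sum_fn]
    _ ≤ ∑ i ∈ s, eLpNorm (fun ω => X i ω ^ 2) p P :=
        eLpNorm_sum_le (fun i hi => (hsq i hi).1.1)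
          (by exact_mod_cast Nat.one_le_iff_ne_zero.mpr hp)
    _ ≤ ∑ i ∈ s, ENNReal.ofReal (c * v i) := Finset.sum_le_sum fun i hi => (hsq i hi).2
    _ = ENNReal.ofReal (c * ∑ i ∈ s, (v i : ℝ)) := by
        rw [Finset.mul_sum, ENNReal.ofReal_sum_of_nonneg fun i _ => by positivity]

end Gaussian

section Moments

variable {d : ℕ} {M : Matrix (Fin d) (Fin d) ℝ} {Ω : Type*} [MeasurableSpace Ω] {P : Measure Ω}
  {x : Ω → Fin d → ℝ}

theorem map_eval_eq_gaussianReal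
    (hgauss : ∀ u : Fin d → ℝ,
      P.map (fun ω => ∑ i, u i * x ω i) = gaussianReal 0 (u ⬝ᵥ M.mulVec u).toNNReal)
    (i : Fin d) : P.map (fun ω => x ω i) = gaussianReal 0 (M i i).toNNReal := by
  simpa [Pi.single_apply, dotProduct, mulVec] using hgauss (Pi.single i 1)

theorem integral_sum_sq_add_trace_pow_le [IsProbabilityMeasure P] (hM : M.PosSemidef)
    (hx : Measurable x)
    (hgauss : ∀ u : Fin d → ℝ,
      P.map (fun ω => ∑ i, u i * x ω i) = gaussianReal 0 (u ⬝ᵥ M.mulVec u).toNNReal)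
    {p : ℕ} (hp : p ≠ 0) {c : ℝ} (hc0 : 0 ≤ c) (hc : 4 * (2 * p)! ≤ c ^ p) :
    Integrable (fun ω => (∑ i, x ω i ^ 2 + M.trace) ^ p) P ∧
      ∫ ω, (∑ i, x ω i ^ 2 + M.trace) ^ p ∂P ≤ ((c + 1) * M.trace) ^ p := by
  have htrace : ∑ i, ((M i i).toNNReal : ℝ) = M.trace := by
    simp [trace, Real.coe_toNNReal _ hM.diag_nonneg]
  obtain ⟨hmem, hle⟩ := eLpNorm_sum_sq_le Finset.univ (X := fun i ω => x ω i)
    (fun i _ => (measurable_pi_apply i).comp_aemeasurable hx.aemeasurable)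
    (fun i _ => map_eval_eq_gaussianReal hgauss i) hp hc0 hc
  rw [htrace] at hle
  rw [add_one_mul]
  exact integral_add_const_pow_le hp hmem (fun ω => Finset.sum_nonneg fun i _ => sq_nonneg _)
    (mul_nonneg hc0 hM.trace_nonneg) hM.trace_nonneg hle

end Moments

/-- Assumption constants for online PCA (Proposition 6.3): for `x ~ N(0, M)` there is an
absolute constant `c > 0` with `E‖xxᵀ − M‖_F⁴ ≤ c(tr M)⁴`, and for `Γ ≥ 1`,
`‖XXᵀ‖_F ≤ Γ`, `‖M‖_F ≤ Γ`, the gradient noise `ξ = (xxᵀ − M)X` of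
`F(X) = (1/2)‖XXᵀ − M‖_F²` satisfies `E⟨ξ, ∇²F(X)ξ⟩ ≤ cΓ²(tr M)²`, where
`⟨Z, ∇²F(X)Z⟩ = (1/2)‖XZᵀ + ZXᵀ‖_F² + ⟨XXᵀ, ZZᵀ⟩ − ⟨M, ZZᵀ⟩`. -/
theorem online_pca_constants :
    ∃ c : ℝ, 0 < c ∧
      ∀ (d r : ℕ) (M : Matrix (Fin d) (Fin d) ℝ), M.PosSemidef →
      ∀ {Ω : Type} [MeasurableSpace Ω] (P : Measure Ω) [IsProbabilityMeasure P]
        (x : Ω → Fin d → ℝ), Measurable x →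
        -- `x ~ N(0, M)`: every linear functional of `x` is a centered Gaussian
        (∀ u : Fin d → ℝ,
          Measure.map (fun ω => ∑ i, u i * x ω i) P
            = gaussianReal 0 (u ⬝ᵥ M.mulVec u).toNNReal) →
        -- (i) fourth moment of `xxᵀ − M`
        (∫ ω, frob (Matrix.vecMulVec (x ω) (x ω) - M) ^ 4 ∂P ≤ c * M.trace ^ 4) ∧
        -- (ii) Hessian-weighted second moment of the gradient noise `ξ = (xxᵀ − M)X`
        (∀ (Γ : ℝ), 1 ≤ Γ → ∀ X : Matrix (Fin d) (Fin r) ℝ,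
          frob (X * Xᵀ) ≤ Γ → frob M ≤ Γ →
          ∫ ω,
              (1 / 2 * frob (X * ((Matrix.vecMulVec (x ω) (x ω) - M) * X)ᵀ
                  + (Matrix.vecMulVec (x ω) (x ω) - M) * X * Xᵀ) ^ 2
                + minner (X * Xᵀ)
                    ((Matrix.vecMulVec (x ω) (x ω) - M) * X
                      * ((Matrix.vecMulVec (x ω) (x ω) - M) * X)ᵀ)
                - minner M
                    ((Matrix.vecMulVec (x ω) (x ω) - M) * X
                      * ((Matrix.vecMulVec (x ω) (x ω) - M) * X)ᵀ)) ∂P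
            ≤ c * Γ ^ 2 * M.trace ^ 2) := by
  refine ⟨22 ^ 4, by norm_num, fun d r M hM Ω _ P _ x hx hgauss => ?_⟩
  obtain ⟨hint4, hmom4⟩ := integral_sum_sq_add_trace_pow_le hM hx hgauss (p := 4) (c := 21)
    (by norm_num) (by norm_num) (by norm_num [Nat.factorial])
  obtain ⟨hint2, hmom2⟩ := integral_sum_sq_add_trace_pow_le hM hx hgauss (p := 2) (c := 10)
    (by norm_num) (by norm_num) (by norm_num [Nat.factorial])
  have hW (ω : Ω) := frob_vecMulVec_sub_le hM (x ω)
  constructor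
  · calc ∫ ω, frob (vecMulVec (x ω) (x ω) - M) ^ 4 ∂P
        ≤ ∫ ω, (∑ i, x ω i ^ 2 + M.trace) ^ 4 ∂P :=
          (le_norm_self _).trans <| norm_integral_le_of_norm_le hint4 <| ae_of_all _ fun ω => by
            rw [norm_pow, norm_of_nonneg (frob_nonneg _)]
            exact pow_le_pow_left₀ (frob_nonneg _) (hW ω) 4
      _ ≤ ((21 + 1) * M.trace) ^ 4 := hmom4
      _ = 22 ^ 4 * M.trace ^ 4 := by ring
  · intro Γ _ X hX hMΓ
    calc ∫ ω, hessianQuadForm M X ((vecMulVec (x ω) (x ω) - M) * X) ∂P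
        ≤ ∫ ω, 4 * Γ ^ 2 * (∑ i, x ω i ^ 2 + M.trace) ^ 2 ∂P :=
          (le_norm_self _).trans <| norm_integral_le_of_norm_le (hint2.const_mul _) <|
            ae_of_all _ fun ω => (abs_hessianQuadForm_mul_le hX hMΓ _).trans <|
              mul_le_mul_of_nonneg_left (pow_le_pow_left₀ (frob_nonneg _) (hW ω) 2) (by positivity)
      _ ≤ 4 * Γ ^ 2 * ((10 + 1) * M.trace) ^ 2 := by
          rw [integral_const_mul]
          gcongr
      _ ≤ 22 ^ 4 * Γ ^ 2 * M.trace ^ 2 := by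
          nlinarith [mul_nonneg (sq_nonneg Γ) (sq_nonneg M.trace)]
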